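/- (Doubling construction.) Let A_1 and A_2 be unitary rings and φ : A_1 → A_2 an anti-isomorphism. On A = A_1 ⊕ A_2 define the involution (x_1, x_2)* = (φ^{-1}(x_2), φ(x_1)). Then SL_*(2,A) is isomorphic as a group to GL(2, A_1). -/
import Mathlib

def SLstarSet {A : Type*} [Ring A] (σ : A → A) : Set (Matrix (Fin 2) (Fin 2) A) :=
  {g | g 0 0 * σ (g 0 1) = g 0 1 * σ (g 0 0) ∧
       g 1 0 * σ (g 1 1) = g 1 1 * σ (g 1 0) ∧
       σ (g 0 0) * g 1 0 = σ (g 1 0) * g 0 0 ∧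
       σ (g 0 1) * g 1 1 = σ (g 1 1) * g 0 1 ∧
       g 0 0 * σ (g 1 1) - g 0 1 * σ (g 1 0) = 1 ∧
       σ (g 0 0) * g 1 1 - σ (g 1 0) * g 0 1 = 1}

def doublingInvolution {A₁ A₂ : Type*} [Ring A₁] [Ring A₂] (φ : A₁ ≃+* A₂ᵐᵒᵖ) :
    A₁ × A₂ → A₁ × A₂ :=
  fun p => (φ.symm (MulOpposite.op p.2), (φ p.1).unop)

namespace SLdbl

variable {A₁ A₂ : Type*} [Ring A₁] [Ring A₂] (φ : A₁ ≃+* A₂ᵐᵒᵖ)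

/-- `ψ : A₂ → A₁`, the inverse anti-isomorphism. -/
def ψ (x : A₂) : A₁ := φ.symm (MulOpposite.op x)

/-- `ψi : A₁ → A₂`, the anti-isomorphism itself. -/
def ψi (x : A₁) : A₂ := (φ x).unop

@[simp] lemma ψ_mul (x y : A₂) : ψ φ (x * y) = ψ φ y * ψ φ x := by
  simp [ψ, ← map_mul]

@[simp] lemma ψ_sub (x y : A₂) : ψ φ (x - y) = ψ φ x - ψ φ y := by
  simp [ψ]

@[simp] lemma ψ_neg (x : A₂) : ψ φ (-x) = -ψ φ x := by simp [ψ]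

@[simp] lemma ψ_one : ψ φ (1 : A₂) = 1 := by simp [ψ]

@[simp] lemma ψ_ψi (x : A₁) : ψ φ (ψi φ x) = x := by simp [ψ, ψi]

@[simp] lemma ψi_ψ (x : A₂) : ψi φ (ψ φ x) = x := by simp [ψ, ψi]

@[simp] lemma ψi_mul (x y : A₁) : ψi φ (x * y) = ψi φ y * ψi φ x := by
  simp [ψi]

lemma ψ_inj {x y : A₂} (h : ψ φ x = ψ φ y) : x = y := by
  have := congrArg (ψi φ) h; simpa using this

/-- first-component matrix -/
def Mf (g : Matrix (Fin 2) (Fin 2) (A₁ × A₂)) : Matrix (Fin 2) (Fin 2) A₁ :=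
  fun i j => (g i j).1

/-- candidate inverse matrix -/
def Kf (g : Matrix (Fin 2) (Fin 2) (A₁ × A₂)) : Matrix (Fin 2) (Fin 2) A₁ :=
  !![ψ φ (g 1 1).2, -ψ φ (g 0 1).2; -ψ φ (g 1 0).2, ψ φ (g 0 0).2]

lemma raw_ψ (x : A₂) : φ.symm (MulOpposite.op x) = ψ φ x := rfl
lemma raw_ψi (x : A₁) : MulOpposite.unop (φ x) = ψi φ x := rfl

lemma mem_iff (g : Matrix (Fin 2) (Fin 2) (A₁ × A₂)) :
    g ∈ SLstarSet (doublingInvolution φ) ↔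
      Mf g * Kf φ g = 1 ∧ Kf φ g * Mf g = 1 := by
  simp only [SLstarSet, Set.mem_setOf_eq, doublingInvolution, Prod.ext_iff, Prod.fst_mul,
    Prod.snd_mul, Prod.fst_sub, Prod.snd_sub, Prod.fst_one, Prod.snd_one, raw_ψ, raw_ψi]
  rw [← Matrix.ext_iff, ← Matrix.ext_iff]
  simp only [Fin.forall_fin_two, Matrix.mul_apply, Fin.sum_univ_two, Mf, Kf,
    Matrix.one_fin_two, Matrix.cons_val', Matrix.cons_val_zero, Matrix.cons_val_one,
    Matrix.head_cons, Matrix.head_fin_const, Matrix.of_apply, Matrix.empty_val',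
    Matrix.cons_val_fin_one]
  constructor
  · rintro ⟨⟨h1a, h1b⟩, ⟨h2a, h2b⟩, ⟨h3a, h3b⟩, ⟨h4a, h4b⟩, ⟨h5a, h5b⟩, h6a, h6b⟩
    have T5b := congrArg (ψ φ) h5b
    simp only [ψ_sub, ψ_mul, ψ_ψi, ψ_one] at T5b
    have T6b := congrArg (ψ φ) h6b
    simp only [ψ_sub, ψ_mul, ψ_ψi, ψ_one] at T6b
    refine ⟨⟨⟨by linear_combination (norm := noncomm_ring) h5a,
        by linear_combination (norm := noncomm_ring) -h1a⟩,
        by linear_combination (norm := noncomm_ring) h2a,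
        by linear_combination (norm := noncomm_ring) T5b⟩,
      ⟨by linear_combination (norm := noncomm_ring) T6b,
        by linear_combination (norm := noncomm_ring) -h4a⟩,
      by linear_combination (norm := noncomm_ring) h3a,
      by linear_combination (norm := noncomm_ring) h6a⟩
  · rintro ⟨⟨⟨m1, m2⟩, m3, m4⟩, ⟨k1, k2⟩, k3, k4⟩
    refine ⟨⟨by linear_combination (norm := noncomm_ring) -m2, ?_⟩,
      ⟨by linear_combination (norm := noncomm_ring) m3, ?_⟩,
      ⟨by linear_combination (norm := noncomm_ring) k3, ?_⟩,
      ⟨by linear_combination (norm := noncomm_ring) -k2, ?_⟩,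
      ⟨by linear_combination (norm := noncomm_ring) m1, ?_⟩,
      by linear_combination (norm := noncomm_ring) k4, ?_⟩
    · refine ψ_inj φ ?_
      simp only [ψ_mul, ψ_ψi]
      linear_combination (norm := noncomm_ring) m2
    · refine ψ_inj φ ?_
      simp only [ψ_mul, ψ_ψi]
      linear_combination (norm := noncomm_ring) -m3
    · refine ψ_inj φ ?_
      simp only [ψ_mul, ψ_ψi]
      linear_combination (norm := noncomm_ring) -k3
    · refine ψ_inj φ ?_
      simp only [ψ_mul, ψ_ψi]
      linear_combination (norm := noncomm_ring) k2
    · refine ψ_inj φ ?_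
      simp only [ψ_sub, ψ_mul, ψ_ψi, ψ_one]
      linear_combination (norm := noncomm_ring) m4
    · refine ψ_inj φ ?_
      simp only [ψ_sub, ψ_mul, ψ_ψi, ψ_one]
      linear_combination (norm := noncomm_ring) k1


@[simp] lemma ψ_add (x y : A₂) : ψ φ (x + y) = ψ φ x + ψ φ y := by simp [ψ]

lemma Mf_mul (g h : Matrix (Fin 2) (Fin 2) (A₁ × A₂)) : Mf (g * h) = Mf g * Mf h := by
  ext i j
  simp [Mf, Matrix.mul_apply, Fin.sum_univ_two]

lemma Kf_mul (g h : Matrix (Fin 2) (Fin 2) (A₁ × A₂)) :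
    Kf φ (g * h) = Kf φ h * Kf φ g := by
  ext i j
  fin_cases i <;> fin_cases j <;>
    simp [Kf, Matrix.mul_apply, Fin.sum_univ_two] <;> abel

/-- inverse construction: a matrix over `A₁ × A₂` from a pair of mutually inverse
matrices over `A₁`. -/
def fromM (v w : Matrix (Fin 2) (Fin 2) A₁) : Matrix (Fin 2) (Fin 2) (A₁ × A₂) :=
  fun i j => (v i j, ψi φ (!![w 1 1, -w 0 1; -w 1 0, w 0 0] i j))

lemma Mf_fromM (v w : Matrix (Fin 2) (Fin 2) A₁) : Mf (fromM φ v w) = v := rfl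

lemma Kf_fromM (v w : Matrix (Fin 2) (Fin 2) A₁) : Kf φ (fromM φ v w) = w := by
  ext i j
  fin_cases i <;> fin_cases j <;> simp [Kf, fromM]

lemma fromM_mem (v w : Matrix (Fin 2) (Fin 2) A₁) (h1 : v * w = 1) (h2 : w * v = 1) :
    fromM φ v w ∈ SLstarSet (doublingInvolution φ) := by
  rw [mem_iff, Kf_fromM, Mf_fromM]
  exact ⟨h1, h2⟩

/-- the inverse map of the equivalence -/
def invF (u : (Matrix (Fin 2) (Fin 2) A₁)ˣ) : ↥(SLstarSet (doublingInvolution φ)) :=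
  ⟨fromM φ u.val u.inv, fromM_mem φ u.val u.inv u.val_inv u.inv_val⟩

end SLdbl

set_option maxHeartbeats 1000000 in
/-- **doubling construction.** Let `A₁`, `A₂` be unitary rings and
`φ : A₁ → A₂` an anti-isomorphism. With the involution `(x₁,x₂)* = (φ⁻¹(x₂), φ(x₁))`
on `A = A₁ ⊕ A₂`, the group `SL_*(2,A)` is isomorphic to `GL(2,A₁)`, the group of
invertible 2×2 matrices over `A₁`. -/
theorem SLstar_doubling_iso_GL2 {A₁ A₂ : Type*} [Ring A₁] [Ring A₂]
    (φ : A₁ ≃+* A₂ᵐᵒᵖ) :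
    ∃ hmul : ∀ g ∈ SLstarSet (doublingInvolution φ), ∀ h ∈ SLstarSet (doublingInvolution φ),
        g * h ∈ SLstarSet (doublingInvolution φ),
      ∃ e : ↥(SLstarSet (doublingInvolution φ)) ≃ (Matrix (Fin 2) (Fin 2) A₁)ˣ,
        ∀ g h : ↥(SLstarSet (doublingInvolution φ)),
          e ⟨(g : Matrix (Fin 2) (Fin 2) (A₁ × A₂)) * h, hmul g g.2 h h.2⟩ = e g * e h := by
  have hmul : ∀ g ∈ SLstarSet (doublingInvolution φ), ∀ h ∈ SLstarSet (doublingInvolution φ),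
      g * h ∈ SLstarSet (doublingInvolution φ) := by
    intro g hg h hh
    rw [SLdbl.mem_iff] at hg hh ⊢
    obtain ⟨g1, g2⟩ := hg
    obtain ⟨h1, h2⟩ := hh
    rw [SLdbl.Mf_mul, SLdbl.Kf_mul]
    constructor
    · calc SLdbl.Mf g * SLdbl.Mf h * (SLdbl.Kf φ h * SLdbl.Kf φ g)
          = SLdbl.Mf g * (SLdbl.Mf h * SLdbl.Kf φ h) * SLdbl.Kf φ g := by noncomm_ring
        _ = 1 := by rw [h1, mul_one, g1]
    · calc SLdbl.Kf φ h * SLdbl.Kf φ g * (SLdbl.Mf g * SLdbl.Mf h)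
          = SLdbl.Kf φ h * (SLdbl.Kf φ g * SLdbl.Mf g) * SLdbl.Mf h := by noncomm_ring
        _ = 1 := by rw [g2, mul_one, h2]
  refine ⟨hmul, ⟨{
    toFun := fun g => ⟨SLdbl.Mf (g : Matrix (Fin 2) (Fin 2) (A₁ × A₂)), SLdbl.Kf φ g,
      ((SLdbl.mem_iff φ _).mp g.2).1, ((SLdbl.mem_iff φ _).mp g.2).2⟩
    invFun := SLdbl.invF φ
    left_inv := ?_
    right_inv := ?_ }, ?_⟩⟩
  · intro g
    apply Subtype.ext
    funext i j
    apply Prod.ext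
    · rfl
    · show SLdbl.ψi φ _ = _
      fin_cases i <;> fin_cases j <;> simp [SLdbl.Kf]
  · intro u
    exact Units.ext rfl
  · intro g h
    apply Units.ext
    exact SLdbl.Mf_mul _ _
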